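/- arXiv:2405.03179 — 2 statements merged into one kernel-verified Lean document; each statement's English description precedes it below -/
import Mathlib

section
/- For each index 1 ≤ j ≤ n, the derivation ∂ maps the subring 𝕃_{j−1}^hom[x_j,y_j] into itself. -/
open scoped BigOperators

noncomputable section

/-- The coefficient ring `R = ℤ[R₁,…,Rₙ]`. -/
abbrev Rring (n : ℕ) : Type := MvPolynomial (Fin n) ℤ

/-- The ring `𝕃ₙ` of Laurent polynomials in `x₁,y₁,…,xₙ,yₙ` over `R`,
encoded as the monoid algebra of `ℤⁿ × ℤⁿ` (the exponents `(k,l)`). -/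
abbrev Lring (n : ℕ) : Type :=
  AddMonoidAlgebra (Rring n) ((Fin n → ℤ) × (Fin n → ℤ))

namespace Panazzolo

/-- `Δⱼ = R₁⋯Rⱼ` (here `j` is 1-indexed: `Dl n j = ∏_{i<j} X i`). -/
def Dl (n j : ℕ) : Rring n :=
  ∏ i ∈ Finset.univ.filter (fun i : Fin n => (i : ℕ) < j), MvPolynomial.X i

/-- Exponent of `P_{j-1} = x₁⋯x_{j-1}/(y₁⋯y_{j-1})` (with `j` 0-indexed). -/
def Pexp (n : ℕ) (j : Fin n) : (Fin n → ℤ) × (Fin n → ℤ) :=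
  (fun i => if i < j then 1 else 0, fun i => if i < j then -1 else 0)

/-- The derivation `∂` on `𝕃ₙ`, determined by
`∂xⱼ = ∂yⱼ = Δⱼ xⱼ (x₁⋯x_{j-1})/(y₁⋯y_{j-1})`. -/
def der (n : ℕ) (p : Lring n) : Lring n :=
  p.coeff.sum fun kl c => ∑ j : Fin n,
    (AddMonoidAlgebra.single (kl + Pexp n j) ((kl.1 j) • (Dl n ((j : ℕ) + 1) * c)) +
     AddMonoidAlgebra.single (kl + Pexp n j + (Pi.single j 1, Pi.single j (-1)))
       ((kl.2 j) • (Dl n ((j : ℕ) + 1) * c)))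

/-- The coefficient `q` of `xᵢ^α yᵢ^β` in `p`, viewed as a polynomial in `(xᵢ,yᵢ)`
(the variables `xᵢ,yᵢ` are erased from the result). -/
def coeffAt (n : ℕ) (i : Fin n) (α β : ℤ) (p : Lring n) : Lring n :=
  ∑ kl ∈ p.coeff.support.filter (fun kl => kl.1 i = α ∧ kl.2 i = β),
    AddMonoidAlgebra.single (Function.update kl.1 i 0, Function.update kl.2 i 0) (p.coeff kl)

/-- `k`-regularity of a Laurent polynomial (the paper's `𝕃ₖ^reg`), defined inductively:
`0`-regular means a nonzero element of the coefficient ring `R`; `p` is `(k+1)`-regular if it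
is homogeneous, involves only the variables `x₁,y₁,…,x_{k+1},y_{k+1}`, is a genuine polynomial
in `(x_{k+1},y_{k+1})` of degree `m`, and the coefficient `q₀` of `x_{k+1}^0 y_{k+1}^m`
is `k`-regular. -/
def IsReg (n : ℕ) : ℕ → Lring n → Prop
  | 0, p => p ≠ 0 ∧ ∀ kl ∈ p.coeff.support, kl = 0
  | (k+1), p =>
      (∀ kl ∈ p.coeff.support, ∀ i : Fin n, k + 1 ≤ (i : ℕ) → kl.1 i = 0 ∧ kl.2 i = 0) ∧
      (∃ d : Fin n → ℤ, ∀ kl ∈ p.coeff.support, kl.1 + kl.2 = d) ∧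
      (∃ m : ℕ, (∀ kl ∈ p.coeff.support, ∀ i : Fin n, (i : ℕ) = k →
          0 ≤ kl.1 i ∧ 0 ≤ kl.2 i ∧ kl.1 i + kl.2 i = (m : ℤ)) ∧
        ∀ i : Fin n, (i : ℕ) = k → IsReg n k (coeffAt n i 0 (m : ℤ) p))

-- The exponent of the regularization monomial `reg(p)` (computed through the first `k`
-- variable pairs, from the top one down).
open Classical in
def regExp (n : ℕ) : ℕ → Lring n → (Fin n → ℤ) × (Fin n → ℤ)
  | 0, _ => 0
  | (k+1), p =>
      if h : k < n ∧ p ≠ 0 then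
        have hs : p.coeff.support.Nonempty := Finsupp.support_nonempty_iff.mpr (mt AddMonoidAlgebra.coeff_eq_zero.mp h.2)
        let i : Fin n := ⟨k, h.1⟩
        let n0 : ℤ := (p.coeff.support.image fun kl => kl.1 i).min' (hs.image _)
        let l0 : ℤ := (p.coeff.support.image fun kl => kl.2 i).min' (hs.image _)
        let n1 : ℤ := (p.coeff.support.image fun kl => kl.2 i).max' (hs.image _)
        (Pi.single i n0, Pi.single i l0) + regExp n k (coeffAt n i n0 n1 p)
      else 0

/-- Division by the regularization monomial: `q ↦ q/reg(q)`. -/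
def divreg (n : ℕ) (q : Lring n) : Lring n :=
  AddMonoidAlgebra.single (-(regExp n n q)) 1 * q

/-- The derivation-division sequence `p⁽⁰⁾ = p`, `p⁽ᵏ⁺¹⁾ = ∂p⁽ᵏ⁾ / reg(∂p⁽ᵏ⁾)`. -/
def seqDD (n : ℕ) (p : Lring n) : ℕ → Lring n
  | 0 => p
  | (k+1) => divreg n (der n (seqDD n p k))

/-- `p` belongs to the coefficient ring `R ⊆ 𝕃ₙ`. -/
def InR (n : ℕ) (p : Lring n) : Prop := ∀ kl ∈ p.coeff.support, kl = 0

/-- The reverse lexicographic (strict) order on `ℕⁿ`. -/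
def rlexLt (n : ℕ) (d d' : Fin n → ℕ) : Prop :=
  ∃ i : Fin n, (∀ j : Fin n, i < j → d j = d' j) ∧ d i < d' i

/-- The monomial `yⱼ^e` (with `j` 1-indexed). -/
def ymon (n : ℕ) (j e : ℕ) : Lring n :=
  AddMonoidAlgebra.single (0, fun i : Fin n => if (i : ℕ) + 1 = j then (e : ℤ) else 0) 1

/-- The nested expression `Q_j + (⋯(Q₂ + (Q₁ + α y₁^{m₁}) y₂^{m₂})⋯) y_j^{m_j}`. -/
def nestedP (n : ℕ) (α : Rring n) (Q : ℕ → Lring n) (m : ℕ → ℕ) : ℕ → Lring n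
  | 0 => AddMonoidAlgebra.single 0 α
  | (j+1) => Q (j+1) + nestedP n α Q m j * ymon n (j+1) (m (j+1))

/-- Auxiliary recursion for the function `H_k` of Section 6. -/
def Haux {k : ℕ} (f : (Fin (k+1) → ℕ) → ℕ) : (Fin (k+1) → ℕ) → ℕ → ℕ
  | μ, 0 => f μ
  | μ, (t+1) => Haux f (Function.update μ (Fin.last k) (μ (Fin.last k) + f μ)) t

/-- The functions `H_k : ℕᵏ → ℕ` of Section 6. -/
def Hfun : (k : ℕ) → (Fin k → ℕ) → ℕ
  | 0, _ => 0
  | 1, m => m 0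
  | (k+2), m => Haux (Hfun (k+1)) (Fin.init m) (m (Fin.last (k+1)))

/-- The regular Laurent polynomial
`p = Δₙ ∑_{j=1}^n (Δⱼ−Δ_{j−1}) (∏_{i=1}^{j−1} xᵢ)(∏_{i=j}^{n−1} yᵢ)`
associated with equation (1) (it lives in the variables `x₁,…,x_{n−1},y₁,…,y_{n−1}`). -/
def pSpec (n : ℕ) : Lring n :=
  ∑ j ∈ Finset.Icc 1 n,
    AddMonoidAlgebra.single
      ((fun i : Fin n => if (i : ℕ) + 1 ≤ j - 1 then 1 else 0),
       (fun i : Fin n => if j ≤ (i : ℕ) + 1 ∧ (i : ℕ) + 1 ≤ n - 1 then (1 : ℤ) else 0))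
      (Dl n n * (Dl n j - Dl n (j - 1)))

/-- `DD(n)`: the number of steps of the derivation-division algorithm applied to `pSpec n`. -/
def DDnum (n : ℕ) : ℕ := sInf {m : ℕ | InR n (seqDD n (pSpec n) m)}

/-- The functions `gᵢ` : `g₀(x) = x`, `g_{i+1}(x) = a_{i+1} + gᵢ(x)^{r_{i+1}}` (real powers),
with 1-indexed parameter families `a r : ℕ → ℝ`. -/
def gfun (a r : ℕ → ℝ) : ℕ → ℝ → ℝ
  | 0 => fun x => x
  | (i+1) => fun x => a (i+1) + gfun a r i x ^ r (i+1)

/-- The functions `fᵢ` : `f_{i+1}(x) = gᵢ(x)^{r_{i+1}}`. -/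
def ffun (a r : ℕ → ℝ) : ℕ → ℝ → ℝ
  | 0 => fun _ => 1
  | (i+1) => fun x => gfun a r i x ^ r (i+1)

/-- The domain `I(a,r)`: the set of `x` where `g₀(x),…,gₙ(x)` are all strictly positive. -/
def Iset (n : ℕ) (a r : ℕ → ℝ) : Set ℝ := {x : ℝ | ∀ i ≤ n, 0 < gfun a r i x}

/-- The solution set `Sₙ(b,a,r) = {x ∈ I(a,r) : gₙ(x) = b x}`. -/
def Sset (n : ℕ) (b : ℝ) (a r : ℕ → ℝ) : Set ℝ :=
  {x ∈ Iset n a r | gfun a r n x = b * x}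

/-- The evaluation morphism `Ψ : 𝕃ₙ → C^ω(I(a,r))`, `Rᵢ ↦ rᵢ`, `xᵢ ↦ fᵢ`, `yᵢ ↦ gᵢ`
(defined pointwise). -/
def Psi (n : ℕ) (a r : ℕ → ℝ) (p : Lring n) : ℝ → ℝ := fun x =>
  p.coeff.sum fun kl c =>
    (MvPolynomial.aeval (fun i : Fin n => r ((i : ℕ) + 1)) c : ℝ) *
      ∏ i : Fin n, (ffun a r ((i : ℕ) + 1) x ^ kl.1 i * gfun a r ((i : ℕ) + 1) x ^ kl.2 i)

/-- `δⱼ = r₁⋯rⱼ` (with `δ₀ = 1`). -/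
def delta (r : ℕ → ℝ) (j : ℕ) : ℝ := ∏ i ∈ Finset.Icc 1 j, r i

/-- Extension of a `Fin n`-indexed parameter vector to a 1-indexed family `ℕ → ℝ`. -/
def extF (n : ℕ) (v : Fin n → ℝ) : ℕ → ℝ :=
  fun i => if h : 1 ≤ i ∧ i ≤ n then v ⟨i - 1, by omega⟩ else 0

end Panazzolo


/-- Membership in the subring `𝕃_{j-1}^hom[x_j,y_j]` (homogeneous Laurent polynomials in the
variables `x₁,y₁,…,x_j,y_j` which are genuine polynomials in `(x_j,y_j)`); `j` is 1-indexed. -/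
def MemLsub (n j : ℕ) (p : Lring n) : Prop :=
  (∃ d : Fin n → ℤ, ∀ kl ∈ p.coeff.support, kl.1 + kl.2 = d) ∧
  (∀ kl ∈ p.coeff.support, ∀ i : Fin n, j ≤ (i : ℕ) → kl.1 i = 0 ∧ kl.2 i = 0) ∧
  (∀ kl ∈ p.coeff.support, ∀ i : Fin n, (i : ℕ) + 1 = j → 0 ≤ kl.1 i ∧ 0 ≤ kl.2 i)

/-- For each `1 ≤ j ≤ n`, the derivation `∂` maps the subring
`𝕃_{j-1}^hom[x_j,y_j]` into itself. -/
theorem statement1 (n j : ℕ) (hj : 1 ≤ j) (hjn : j ≤ n) (p : Lring n)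
    (hp : MemLsub n j p) : MemLsub n j (Panazzolo.der n p) := by
  obtain ⟨⟨d, hd⟩, hvar, hpos⟩ := hp
  have key : ∀ kl' ∈ (Panazzolo.der n p).coeff.support,
      ∃ kl ∈ p.coeff.support, ∃ i : Fin n, ¬ j ≤ (i : ℕ) ∧
        (kl' = kl + Panazzolo.Pexp n i ∨
         (kl' = kl + Panazzolo.Pexp n i + (Pi.single i 1, Pi.single i (-1)) ∧
           kl.2 i ≠ 0)) := by
    intro kl' h
    rw [Panazzolo.der, AddMonoidAlgebra.coeff_finsuppSum, Finsupp.sum] at h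
    simp only [AddMonoidAlgebra.coeff_sum, AddMonoidAlgebra.coeff_add,
      AddMonoidAlgebra.coeff_single] at h
    obtain ⟨kl, hkl, h2⟩ := Finsupp.mem_support_finset_sum kl' h
    obtain ⟨i, _, h3⟩ := Finsupp.mem_support_finset_sum kl' h2
    have hnij : ∀ (hyp : kl.1 i ≠ 0 ∨ kl.2 i ≠ 0), ¬ j ≤ (i : ℕ) := by
      intro hyp hji
      obtain ⟨h1, h2⟩ := hvar kl hkl i hji
      rcases hyp with hy | hy <;> simp [h1, h2] at hy
    rcases Finset.mem_union.mp (Finsupp.support_add h3) with h4 | h4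
    · rcases Finset.mem_singleton.mp (Finsupp.support_single_subset h4) with rfl
      have hne : kl.1 i ≠ 0 := by
        intro h0
        simp [h0, zero_smul, Finsupp.single_zero] at h4
      exact ⟨kl, hkl, i, hnij (Or.inl hne), Or.inl rfl⟩
    · rcases Finset.mem_singleton.mp (Finsupp.support_single_subset h4) with rfl
      have hne : kl.2 i ≠ 0 := by
        intro h0
        simp [h0, zero_smul, Finsupp.single_zero] at h4
      exact ⟨kl, hkl, i, hnij (Or.inr hne), Or.inr ⟨rfl, hne⟩⟩
  refine ⟨⟨d, ?_⟩, ?_, ?_⟩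
  · intro kl' h
    obtain ⟨kl, hkl, i, hij, hc⟩ := key kl' h
    have hdk := hd kl hkl
    funext i'
    have hdk' := congrFun hdk i'
    rcases hc with rfl | ⟨rfl, -⟩ <;>
      simp only [Panazzolo.Pexp, Prod.fst_add, Prod.snd_add, Pi.add_apply,
        Pi.single_apply] at hdk' ⊢ <;> split_ifs <;> omega
  · intro kl' h i' hji'
    obtain ⟨kl, hkl, i, hij, hc⟩ := key kl' h
    obtain ⟨h1, h2⟩ := hvar kl hkl i' hji'
    have hii' : ¬ i' < i := by
      intro hlt
      rw [Fin.lt_def] at hlt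
      omega
    have hne : i' ≠ i := by
      intro hE
      rw [← hE] at hij
      exact hij hji'
    rcases hc with rfl | ⟨rfl, -⟩ <;>
      simp only [Panazzolo.Pexp, Prod.fst_add, Prod.snd_add, Pi.add_apply,
        Pi.single_apply, if_neg hii', if_neg hne, h1, h2] <;> norm_num
  · intro kl' h i' hji'
    obtain ⟨kl, hkl, i, hij, hc⟩ := key kl' h
    obtain ⟨h1, h2⟩ := hpos kl hkl i' hji'
    have hii' : ¬ i' < i := by
      intro hlt
      rw [Fin.lt_def] at hlt
      omega
    rcases hc with rfl | ⟨rfl, hne⟩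
    · simp only [Panazzolo.Pexp, Prod.fst_add, Prod.snd_add, Pi.add_apply,
        if_neg hii']
      omega
    · have hne2 : i' = i → 1 ≤ kl.2 i' := by
        intro hE
        rw [← hE] at hne
        omega
      simp only [Panazzolo.Pexp, Prod.fst_add, Prod.snd_add, Pi.add_apply,
        Pi.single_apply, if_neg hii']
      constructor <;> split_ifs with hE <;> [skip; omega; skip; omega] <;>
        have := hne2 hE <;> omega
end
end

section
/- Let n = 1 and let p ∈ 𝕃_1^reg be a 1-regular polynomial of poly-degree m, i.e. p = Σ_{j=0}^{m} α_j x_1^j y_1^{m−j} with coefficients α_j ∈ R = ℤ[R_1]. Then the derivation-division complexity satisfies DD(p) ≤ m. -/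
open scoped BigOperators

noncomputable section

namespace S7Aux

open Panazzolo

/-- The invariant: homogeneous of degree `m` with nonnegative exponents. -/
def Good (m : ℕ) (q : Lring 1) : Prop :=
  ∀ kl ∈ q.coeff.support, 0 ≤ kl.1 0 ∧ 0 ≤ kl.2 0 ∧ kl.1 0 + kl.2 0 = (m : ℤ)

lemma fun1_eq_zero (f : Fin 1 → ℤ) (h : f 0 = 0) : f = 0 := by
  funext i
  rw [Subsingleton.elim i 0]
  exact h

lemma pexp_zero : Pexp 1 0 = 0 := by
  unfold Pexp
  refine Prod.ext ?_ ?_ <;> funext i <;> simp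

lemma der_support {m : ℕ} {q : Lring 1} (hq : Good m q) :
    ∀ kl ∈ (der 1 q).coeff.support,
      1 ≤ kl.1 0 ∧ 0 ≤ kl.2 0 ∧ kl.1 0 + kl.2 0 = (m : ℤ) := by
  classical
  intro kl hkl
  unfold der at hkl
  rw [Finsupp.sum, AddMonoidAlgebra.coeff_sum] at hkl
  have h := Finsupp.support_finset_sum hkl
  rw [Finset.mem_biUnion] at h
  obtain ⟨a, ha, hmem⟩ := h
  rw [Fin.sum_univ_one, AddMonoidAlgebra.coeff_add] at hmem
  have h2 := Finsupp.support_add hmem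
  obtain ⟨h0a, h0b, h0c⟩ := hq a ha
  rw [Finset.mem_union] at h2
  rcases h2 with h2 | h2
  · rw [AddMonoidAlgebra.coeff_single, Finsupp.mem_support_single] at h2
    obtain ⟨hkleq, hne⟩ := h2
    have hane : a.1 0 ≠ 0 := by
      intro hz
      rw [hz, zero_smul] at hne
      exact hne rfl
    rw [hkleq, pexp_zero, add_zero]
    exact ⟨by omega, h0b, h0c⟩
  · rw [AddMonoidAlgebra.coeff_single, Finsupp.mem_support_single] at h2
    obtain ⟨hkleq, hne⟩ := h2
    have hane : a.2 0 ≠ 0 := by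
      intro hz
      rw [hz, zero_smul] at hne
      exact hne rfl
    rw [hkleq, pexp_zero, add_zero]
    simp only [Prod.fst_add, Prod.snd_add, Pi.add_apply, Pi.single_eq_same]
    refine ⟨by omega, by omega, by omega⟩

lemma regExp_one {q : Lring 1} (hne : q ≠ 0) :
    regExp 1 1 q =
      (Pi.single (0 : Fin 1)
          ((q.coeff.support.image fun kl => kl.1 0).min'
            ((Finsupp.support_nonempty_iff.mpr (mt AddMonoidAlgebra.coeff_eq_zero.mp hne)).image _)),
       Pi.single (0 : Fin 1)
          ((q.coeff.support.image fun kl => kl.2 0).min'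
            ((Finsupp.support_nonempty_iff.mpr (mt AddMonoidAlgebra.coeff_eq_zero.mp hne)).image _))) := by
  rw [regExp.eq_def]
  simp only []
  rw [dif_pos ⟨Nat.zero_lt_one, hne⟩]
  have h0 : ∀ x, regExp 1 0 x = 0 := fun x => by rw [regExp.eq_def]
  rw [h0, add_zero]
  rfl

lemma divreg_good {m : ℕ} {q' : Lring 1} (hne : q' ≠ 0)
    (H : ∀ kl ∈ q'.coeff.support,
      1 ≤ kl.1 0 ∧ 0 ≤ kl.2 0 ∧ kl.1 0 + kl.2 0 = (m : ℤ)) :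
    ∃ m' : ℕ, m' < m ∧ Good m' (divreg 1 q') := by
  classical
  have hs : q'.coeff.support.Nonempty := Finsupp.support_nonempty_iff.mpr (mt AddMonoidAlgebra.coeff_eq_zero.mp hne)
  set n0 : ℤ := (q'.coeff.support.image fun kl => kl.1 0).min' (hs.image _) with hn0def
  set l0 : ℤ := (q'.coeff.support.image fun kl => kl.2 0).min' (hs.image _) with hl0def
  obtain ⟨kl0, hkl0, hkl0e⟩ :=
    Finset.mem_image.mp (Finset.min'_mem _ (hs.image fun kl => kl.1 0))
  obtain ⟨kl1, hkl1, hkl1e⟩ :=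
    Finset.mem_image.mp (Finset.min'_mem _ (hs.image fun kl => kl.2 0))
  have h1 : 1 ≤ n0 := le_of_le_of_eq (H kl0 hkl0).1 hkl0e
  have hl0nonneg : 0 ≤ l0 := le_of_le_of_eq (H kl1 hkl1).2.1 hkl1e
  have hl0le : l0 ≤ kl0.2 0 :=
    Finset.min'_le _ _ (Finset.mem_image_of_mem _ hkl0)
  have hsum0 := (H kl0 hkl0).2.2
  have hsum : n0 + l0 ≤ (m : ℤ) := by omega
  refine ⟨((m : ℤ) - n0 - l0).toNat, by omega, ?_⟩
  intro kl hkl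
  unfold divreg at hkl
  rw [Finsupp.mem_support_iff, AddMonoidAlgebra.coeff_single_mul_apply, regExp_one hne,
    neg_neg, one_mul] at hkl
  rw [← hn0def, ← hl0def] at hkl
  have hmem : ((Pi.single (0 : Fin 1) n0, Pi.single (0 : Fin 1) l0) + kl) ∈ q'.coeff.support :=
    Finsupp.mem_support_iff.mpr hkl
  have hH := H _ hmem
  have hmin1 : n0 ≤ ((Pi.single (0 : Fin 1) n0, Pi.single (0 : Fin 1) l0) + kl).1 0 :=
    Finset.min'_le _ _ (Finset.mem_image_of_mem _ hmem)
  have hmin2 : l0 ≤ ((Pi.single (0 : Fin 1) n0, Pi.single (0 : Fin 1) l0) + kl).2 0 :=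
    Finset.min'_le _ _ (Finset.mem_image_of_mem _ hmem)
  simp only [Prod.fst_add, Prod.snd_add, Pi.add_apply, Pi.single_eq_same] at hH hmin1 hmin2
  refine ⟨by omega, by omega, by omega⟩

lemma seq_shift (q : Lring 1) (k : ℕ) :
    seqDD 1 q (k + 1) = seqDD 1 (divreg 1 (der 1 q)) k := by
  induction k with
  | zero => rfl
  | succ k ih =>
      show divreg 1 (der 1 (seqDD 1 q (k + 1))) = _
      rw [ih]
      rfl

lemma main : ∀ m : ℕ, ∀ q : Lring 1, Good m q →
    ∃ k ≤ m, InR 1 (seqDD 1 q k) := by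
  intro m
  induction m using Nat.strong_induction_on with
  | _ m ih =>
    intro q hq
    by_cases hd : der 1 q = 0
    · rcases Nat.eq_zero_or_pos m with hm | hm
      · refine ⟨0, Nat.zero_le m, ?_⟩
        intro kl hkl
        obtain ⟨h1, h2, h3⟩ := hq kl hkl
        subst hm
        refine Prod.ext ?_ ?_ <;> apply fun1_eq_zero <;> omega
      · refine ⟨1, hm, ?_⟩
        show InR 1 (divreg 1 (der 1 (seqDD 1 q 0)))
        show InR 1 (divreg 1 (der 1 q))
        rw [hd]
        unfold divreg
        rw [mul_zero]
        intro kl hkl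
        simp at hkl
    · obtain ⟨m', hm', hgood⟩ := divreg_good hd (der_support hq)
      obtain ⟨k, hk, hinr⟩ := ih m' hm' _ hgood
      exact ⟨k + 1, by omega, by rw [seq_shift]; exact hinr⟩

end S7Aux


/-- For `n = 1`: a 1-regular polynomial `p = ∑_{j=0}^m αⱼ x₁^j y₁^{m-j}`
of poly-degree `m` has derivation-division complexity `DD(p) ≤ m`. -/
theorem statement7 (p : Lring 1) (m : ℕ) (hreg : Panazzolo.IsReg 1 1 p)
    (hdeg : ∀ kl ∈ p.coeff.support, kl.1 0 + kl.2 0 = (m : ℤ)) :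
    ∃ k ≤ m, Panazzolo.InR 1 (Panazzolo.seqDD 1 p k) := by
  unfold Panazzolo.IsReg at hreg
  obtain ⟨-, -, m0, h3, -⟩ := hreg
  refine S7Aux.main m p ?_
  intro kl hkl
  obtain ⟨ha, hb, -⟩ := h3 kl hkl 0 rfl
  exact ⟨ha, hb, hdeg kl hkl⟩
end
end
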